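/- The second derivatives of the $B_{2,5}$ and $B_{3,6}$ potentials in their negative-sector variables stabilize: under the variable identification sending the Laurent variable and negative-sector variables of $\mathcal{F}_{2,5}$ (i.e., $t_5, t_4, t_3$ in its numbering) to those of $\mathcal{F}_{3,6}$ (i.e., $t_6, t_5, t_4$) and identifying the distinguished variables $t_2 \leftrightarrow t_3$, $t_1 \leftrightarrow t_2$ (after the rescaling $t^\epsilon = 4k\,\tilde t^\epsilon$ for positive-sector variables with $k=2$ resp. $k=3$, $t^{k+1} = 2\tilde t^0$, $t^l = 2\tilde t^{k+1-l}$, $t^\nu = 4(l-k)\tilde t^{k+1-\nu}$ for intermediate $\nu > k+1$), the equality $\frac{\partial^2 \mathcal{F}_{2,5}}{\partial t_3\, \partial t_4}(\tilde t) = \frac{\partial^2 \mathcal{F}_{3,6}}{\partial t_4\, \partial t_5}(\tilde t)$ holds as rational functions of the common rescaled variables $\tilde t$. -/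

import Mathlib

/-!
Both potentials contain the same Laurent part
`Φ(a, b, c) = a²b/(24c) - ab³/(216c²) + b⁵/(4320c³)`, in `(t₃, t₄, t₅)` for `𝓕_{2,5}` and in
`(t₄, t₅, t₆)` for `𝓕_{3,6}`, and every other monomial is free of one of the two differentiation
variables. So both mixed derivatives are `∂²Φ/∂a∂b` at the restricted point, and the rescalings
send both restricted points to `(2 s₀, 12 s₋₁, 2 s₋₂)`: no derivative has to be computed.
-/

/-- Partial derivative in the `i`-th coordinate direction. -/
noncomputable def pd {n : ℕ} (i : Fin n) (f : (Fin n → ℝ) → ℝ) : (Fin n → ℝ) → ℝ :=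
  fun x => fderiv ℝ f x (Pi.single i 1)

/-- The `B_{2,5}` potential `𝓕_{2,5}(t_1, …, t_5)`. -/
noncomputable def F25 : (Fin 5 → ℝ) → ℝ := fun t =>
  (t 4) ^ 6 / 10 + t 0 * t 3 * (t 4) ^ 3 / 6 + (t 0) ^ 2 * t 2 * t 4 / 16
    + t 1 * t 2 * t 4 / 2 + (t 0) ^ 5 / 7680 + t 0 * (t 1) ^ 2 / 16
    + (t 0) ^ 2 * (t 3) ^ 2 / 192 + t 1 * (t 3) ^ 2 / 24
    + (t 2) ^ 2 * t 3 / (24 * t 4) - t 2 * (t 3) ^ 3 / (216 * (t 4) ^ 2)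
    + (t 3) ^ 5 / (4320 * (t 4) ^ 3)

/-- The `B_{3,6}` potential `𝓕_{3,6}(t_1, …, t_6)`. -/
noncomputable def F36 : (Fin 6 → ℝ) → ℝ := fun t =>
  (t 0) ^ 7 / 3265920 + (t 1) ^ 2 * (t 0) ^ 3 / 2592 + (t 4) ^ 2 * (t 0) ^ 3 / 2592
    + t 3 * t 5 * (t 0) ^ 3 / 216 + t 4 * (t 5) ^ 3 * (t 0) ^ 2 / 24
    + (t 5) ^ 6 * t 0 / 10 - (t 1) ^ 3 * t 0 / 432 + (t 2) ^ 2 * t 0 / 24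
    + t 1 * (t 4) ^ 2 * t 0 / 144 + t 1 * t 3 * t 5 * t 0 / 12
    + t 1 * t 4 * (t 5) ^ 3 / 6 + t 2 * (t 4) ^ 2 / 24 + (t 1) ^ 2 * t 2 / 24
    + t 2 * t 3 * t 5 / 2 + (t 3) ^ 2 * t 4 / (24 * t 5)
    - t 3 * (t 4) ^ 3 / (216 * (t 5) ^ 2) + (t 4) ^ 5 / (4320 * (t 5) ^ 3)

section Invariance

variable {E F : Type*} [NormedAddCommGroup E] [NormedSpace ℝ E]
  [NormedAddCommGroup F] [NormedSpace ℝ F] {f : E → F} {v : E}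

theorem fderiv_apply_eq_zero_of_forall_add_smul (h : ∀ x (c : ℝ), f (x + c • v) = f x) (x : E) :
    fderiv ℝ f x v = 0 := by
  by_cases hd : DifferentiableAt ℝ f x
  · have hline : HasDerivAt (fun c : ℝ => x + c • v) v 0 := by
      simpa using ((hasDerivAt_id (0 : ℝ)).smul_const v).const_add x
    have hderiv : HasDerivAt (fun c : ℝ => f (x + c • v)) (fderiv ℝ f x v) 0 :=
      hd.hasFDerivAt.comp_hasDerivAt_of_eq 0 hline (by simp)
    have hconst : HasDerivAt (fun c : ℝ => f (x + c • v)) 0 0 := by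
      simp only [h]
      exact hasDerivAt_const _ _
    exact hderiv.unique hconst
  · simp [fderiv_zero_of_not_differentiableAt hd]

theorem fderiv_add_smul_of_forall_add_smul (h : ∀ x (c : ℝ), f (x + c • v) = f x) (x : E)
    (c : ℝ) : fderiv ℝ f (x + c • v) = fderiv ℝ f x := by
  rw [← fderiv_comp_add_right, funext fun y => h y c]

end Invariance

section PartialDerivatives

variable {n : ℕ} {f g : (Fin n → ℝ) → ℝ} {x : Fin n → ℝ}

theorem Filter.EventuallyEq.pd_eq (h : f =ᶠ[nhds x] g) (i : Fin n) : pd i f x = pd i g x := by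
  simp only [pd, h.fderiv_eq]

theorem pd_add (hf : DifferentiableAt ℝ f x) (hg : DifferentiableAt ℝ g x) (i : Fin n) :
    pd i (fun y => f y + g y) x = pd i f x + pd i g x := by
  rw [pd, fderiv_fun_add hf hg]
  rfl

theorem ContDiffAt.differentiableAt_pd (hf : ContDiffAt ℝ 2 f x) (i : Fin n) :
    DifferentiableAt ℝ (pd i f) x :=
  ((hf.fderiv_right (m := 1) le_rfl).clm_apply contDiffAt_const).differentiableAt one_ne_zero

theorem pd_pd_add (hf : ContDiffAt ℝ 2 f x) (hg : ContDiffAt ℝ 2 g x) (i j : Fin n) :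
    pd i (pd j fun y => f y + g y) x = pd i (pd j f) x + pd i (pd j g) x := by
  have hsum : pd j (fun y => f y + g y) =ᶠ[nhds x] fun y => pd j f y + pd j g y := by
    filter_upwards [hf.eventually (by simp), hg.eventually (by simp)] with y hfy hgy
    exact pd_add (hfy.differentiableAt two_ne_zero) (hgy.differentiableAt two_ne_zero) j
  rw [hsum.pd_eq, pd_add (hf.differentiableAt_pd j) (hg.differentiableAt_pd j)]

theorem pd_eq_zero_of_forall_add_smul (h : ∀ y (c : ℝ), f (y + c • Pi.single i 1) = f y)
    (x : Fin n → ℝ) : pd i f x = 0 :=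
  fderiv_apply_eq_zero_of_forall_add_smul h x

theorem pd_pd_eq_zero_of_left (h : ∀ y (c : ℝ), f (y + c • Pi.single i 1) = f y) (j : Fin n)
    (x : Fin n → ℝ) : pd i (pd j f) x = 0 :=
  pd_eq_zero_of_forall_add_smul (fun y c => by
    simp only [pd, fderiv_add_smul_of_forall_add_smul h]) x

theorem pd_pd_eq_zero_of_right (h : ∀ y (c : ℝ), f (y + c • Pi.single j 1) = f y) (i : Fin n)
    (x : Fin n → ℝ) : pd i (pd j f) x = 0 :=
  pd_eq_zero_of_forall_add_smul (fun y c => by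
    rw [pd_eq_zero_of_forall_add_smul h, pd_eq_zero_of_forall_add_smul h]) x

theorem pd_pd_eq_of_eq_add_add {u w : (Fin n → ℝ) → ℝ} {i j : Fin n}
    (hf : f = fun y => u y + w y + g y) (hu : ContDiffAt ℝ 2 u x) (hw : ContDiffAt ℝ 2 w x)
    (hg : ContDiffAt ℝ 2 g x) (hui : ∀ y (c : ℝ), u (y + c • Pi.single i 1) = u y)
    (hwj : ∀ y (c : ℝ), w (y + c • Pi.single j 1) = w y) :
    pd i (pd j f) x = pd i (pd j g) x := by
  rw [hf, pd_pd_add (hu.add hw) hg, pd_pd_add hu hw, pd_pd_eq_zero_of_left hui,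
    pd_pd_eq_zero_of_right hwj, add_zero, zero_add]

end PartialDerivatives

section CoordinateEmbedding

variable {m n : ℕ} {σ : Fin m → Fin n} {g : (Fin m → ℝ) → ℝ} {x : Fin n → ℝ}

theorem pd_comp_of_injective (hσ : Function.Injective σ) (hg : DifferentiableAt ℝ g (x ∘ σ))
    (i : Fin m) : pd (σ i) (fun t => g (t ∘ σ)) x = pd i g (x ∘ σ) := by
  let L : (Fin n → ℝ) →L[ℝ] Fin m → ℝ :=
    ContinuousLinearMap.pi fun k => ContinuousLinearMap.proj (σ k)
  have hsingle : (Pi.single (σ i) 1 : Fin n → ℝ) ∘ σ = Pi.single i 1 := by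
    ext k
    simp [Pi.single_apply, hσ.eq_iff]
  have hcomp : HasFDerivAt (fun t => g (t ∘ σ)) ((fderiv ℝ g (x ∘ σ)).comp L) x :=
    hg.hasFDerivAt.comp x L.hasFDerivAt
  rw [pd, hcomp.fderiv, ContinuousLinearMap.comp_apply]
  exact congrArg (fderiv ℝ g (x ∘ σ)) hsingle

theorem pd_pd_comp_of_injective (hσ : Function.Injective σ) (hg : ContDiffAt ℝ 2 g (x ∘ σ))
    (i j : Fin m) :
    pd (σ i) (pd (σ j) fun t => g (t ∘ σ)) x = pd i (pd j g) (x ∘ σ) := by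
  have hrestrict : Continuous fun t : Fin n → ℝ => t ∘ σ := by fun_prop
  have hfirst : pd (σ j) (fun t => g (t ∘ σ)) =ᶠ[nhds x] fun t => pd j g (t ∘ σ) := by
    filter_upwards [hrestrict.continuousAt.eventually (hg.eventually (by simp))] with y hy
    exact pd_comp_of_injective hσ (hy.differentiableAt two_ne_zero) j
  rw [hfirst.pd_eq]
  exact pd_comp_of_injective hσ (hg.differentiableAt_pd j) i

end CoordinateEmbedding

noncomputable def laurentPart (u : Fin 3 → ℝ) : ℝ :=
  u 0 ^ 2 * u 1 / (24 * u 2) - u 0 * u 1 ^ 3 / (216 * u 2 ^ 2) + u 1 ^ 5 / (4320 * u 2 ^ 3)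

theorem contDiffAt_laurentPart {u : Fin 3 → ℝ} (hu : u 2 ≠ 0) : ContDiffAt ℝ 2 laurentPart u := by
  unfold laurentPart
  fun_prop (disch := positivity)

theorem pd_pd_F25 {x : Fin 5 → ℝ} (hx : x 4 ≠ 0) :
    pd 2 (pd 3 F25) x = pd 0 (pd 1 laurentPart) (x ∘ ![2, 3, 4]) := by
  rw [pd_pd_eq_of_eq_add_add (g := fun t => laurentPart (t ∘ ![2, 3, 4]))
    (u := fun t => t 4 ^ 6 / 10 + t 0 * t 3 * t 4 ^ 3 / 6 + t 0 ^ 5 / 7680 + t 0 * t 1 ^ 2 / 16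
      + t 0 ^ 2 * t 3 ^ 2 / 192 + t 1 * t 3 ^ 2 / 24)
    (w := fun t => t 0 ^ 2 * t 2 * t 4 / 16 + t 1 * t 2 * t 4 / 2)]
  · exact pd_pd_comp_of_injective (σ := ![2, 3, 4]) (by decide) (contDiffAt_laurentPart hx) 0 1
  · funext t
    simp only [F25, laurentPart, Function.comp_apply, Matrix.cons_val_zero,
      Matrix.cons_val_one, Matrix.cons_val]
    ring
  · fun_prop
  · fun_prop
  · exact (contDiffAt_laurentPart hx).comp x (by fun_prop)
  · intro y c
    simp
  · intro y c
    simp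

theorem pd_pd_F36 {x : Fin 6 → ℝ} (hx : x 5 ≠ 0) :
    pd 3 (pd 4 F36) x = pd 0 (pd 1 laurentPart) (x ∘ ![3, 4, 5]) := by
  rw [pd_pd_eq_of_eq_add_add (g := fun t => laurentPart (t ∘ ![3, 4, 5]))
    (u := fun t => t 0 ^ 7 / 3265920 + t 1 ^ 2 * t 0 ^ 3 / 2592 + t 4 ^ 2 * t 0 ^ 3 / 2592
      + t 4 * t 5 ^ 3 * t 0 ^ 2 / 24 + t 5 ^ 6 * t 0 / 10 - t 1 ^ 3 * t 0 / 432
      + t 2 ^ 2 * t 0 / 24 + t 1 * t 4 ^ 2 * t 0 / 144 + t 1 * t 4 * t 5 ^ 3 / 6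
      + t 2 * t 4 ^ 2 / 24 + t 1 ^ 2 * t 2 / 24)
    (w := fun t => t 3 * t 5 * t 0 ^ 3 / 216 + t 1 * t 3 * t 5 * t 0 / 12 + t 2 * t 3 * t 5 / 2)]
  · exact pd_pd_comp_of_injective (σ := ![3, 4, 5]) (by decide) (contDiffAt_laurentPart hx) 0 1
  · funext t
    simp only [F36, laurentPart, Function.comp_apply, Matrix.cons_val_zero,
      Matrix.cons_val_one, Matrix.cons_val]
    ring
  · fun_prop
  · fun_prop
  · exact (contDiffAt_laurentPart hx).comp x (by fun_prop)
  · intro y c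
    simp
  · intro y c
    simp

/-- Stabilization of second derivatives in the negative sector (`d = 3`, `r = 1`):
after the rescalings `t^ε = 4k·s^ε` (positive sector), `t^{k+1} = 2 s^0`,
`t^ν = 4(l-k) s^{k+1-ν}` (intermediate), `t^l = 2 s^{k+1-l}` (Laurent variable) — i.e.
for `𝓕_{2,5}`: `(t_1,…,t_5) = (8 s_1, 8 s_2, 2 s_0, 12 s_{-1}, 2 s_{-2})` and for
`𝓕_{3,6}`: `(t_1,…,t_6) = (12 s_1, 12 s_2, 12 s_3, 2 s_0, 12 s_{-1}, 2 s_{-2})` —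
one has `(∂²𝓕_{2,5}/∂t_3∂t_4)(s̃) = (∂²𝓕_{3,6}/∂t_4∂t_5)(s̃)` as functions of the
common rescaled variables `s` on `s_{-2} ≠ 0`. -/
theorem stmt14 (s : ℤ → ℝ) (hs : s (-2) ≠ 0) :
    pd 2 (pd 3 F25) ![8 * s 1, 8 * s 2, 2 * s 0, 12 * s (-1), 2 * s (-2)]
      = pd 3 (pd 4 F36)
          ![12 * s 1, 12 * s 2, 12 * s 3, 2 * s 0, 12 * s (-1), 2 * s (-2)] := by
  have hs₂ : 2 * s (-2) ≠ 0 := mul_ne_zero two_ne_zero hs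
  rw [pd_pd_F25 hs₂, pd_pd_F36 hs₂]
  congr 1
  ext k
  fin_cases k <;> rfl
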